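/- arXiv:2103.08459 — 2 statements merged into one kernel-verified Lean document; each statement's English description precedes it below -/
import Mathlib

section
/- Let V be a finite set of system variables partitioned into inputs I and outputs O. For each k ∈ {1, …, m}, let Lk ⊆ (2^{Vk})^ω be a language over a subset Vk ⊆ V such that Vi ∩ Vj ⊆ I for all i ≠ j, V1 ∪ … ∪ Vm = V, and the iterated non-contradictory composition L1 ∥ L2 ∥ … ∥ Lm equals L ⊆ (2^V)^ω. Assume that for every k, whenever Lk is not realizable by an implementation over variables Vk, there exists a counterstrategy for Lk. Then L is realizable if and only if Lk is realizable for every k ∈ {1, …, m}; moreover, if f1, …, fm realize L1, …, Lm respectively, then the implementation f defined by f(σ, i) = ⋃_{k=1}^{m} fk(σ ∩ Vk, i ∩ Vk) realizes L. -/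
namespace SpecDecomp

variable {α : Type*}

/-- Restriction of an infinite word: intersect each letter with `X`. -/
def restrict (σ : ℕ → Set α) (X : Set α) : ℕ → Set α := fun n => σ n ∩ X

/-- Restriction of a finite word (history): intersect each letter with `X`. -/
def restrictFin (h : List (Set α)) (X : Set α) : List (Set α) := h.map (· ∩ X)

/-- Letterwise union of infinite words. -/
def wordUnion (σ₁ σ₂ : ℕ → Set α) : ℕ → Set α := fun n => σ₁ n ∪ σ₂ n

/-- The set of infinite words over the alphabet `2^W`. -/
def WordsOver (W : Set α) : Set (ℕ → Set α) := {σ | ∀ n, σ n ⊆ W}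

/-- Non-contradictory composition of a language `L₁` over `2^{W₁}` and a
language `L₂` over `2^{W₂}`. -/
def comp (L₁ : Set (ℕ → Set α)) (W₁ : Set α) (L₂ : Set (ℕ → Set α)) (W₂ : Set α) :
    Set (ℕ → Set α) :=
  {σ | ∃ σ₁ ∈ L₁, ∃ σ₂ ∈ L₂, restrict σ₁ W₂ = restrict σ₂ W₁ ∧ σ = wordUnion σ₁ σ₂}

/-- The finite history consisting of the first `n` letters of `σ`. -/
def hist (σ : ℕ → Set α) (n : ℕ) : List (Set α) := (List.range n).map σ

/-- An infinite word over `2^W` is compatible with the implementation `f`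
(for variables `W`, inputs `Iw`, outputs `Ow`). -/
def CompatibleImpl (W Iw Ow : Set α) (f : List (Set α) → Set α → Set α)
    (σ : ℕ → Set α) : Prop :=
  (∀ n, σ n ⊆ W) ∧ ∀ n, f (hist σ n) (σ n ∩ Iw) = σ n ∩ Ow

/-- The implementation `f` realizes the language `L`. -/
def Realizes (W Iw Ow : Set α) (f : List (Set α) → Set α → Set α)
    (L : Set (ℕ → Set α)) : Prop :=
  ∀ σ, CompatibleImpl W Iw Ow f σ → σ ∈ L

/-- `L` is realizable over variables `W` with inputs `Iw` and outputs `Ow`. -/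
def Realizable (W Iw Ow : Set α) (L : Set (ℕ → Set α)) : Prop :=
  ∃ f : List (Set α) → Set α → Set α,
    (∀ h i, f h i ⊆ Ow) ∧ Realizes W Iw Ow f L

/-- An infinite word over `2^W` is compatible with the counterstrategy `fc`. -/
def CompatibleCounter (W Iw : Set α) (fc : List (Set α) → Set α)
    (σ : ℕ → Set α) : Prop :=
  (∀ n, σ n ⊆ W) ∧ ∀ n, fc (hist σ n) = σ n ∩ Iw

/-- `fc` is a counterstrategy for `L`: every compatible word lies in the
complement of `L`. -/
def Counterstrategy (W Iw : Set α) (fc : List (Set α) → Set α)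
    (L : Set (ℕ → Set α)) : Prop :=
  ∀ σ, CompatibleCounter W Iw fc σ → σ ∉ L

/-- The union `Vs 0 ∪ … ∪ Vs n` of the first `n + 1` alphabets. -/
def accAlpha (Vs : ℕ → Set α) : ℕ → Set α
  | 0 => Vs 0
  | n + 1 => accAlpha Vs n ∪ Vs (n + 1)

/-- Iterated non-contradictory composition `Ls 0 ∥ Ls 1 ∥ … ∥ Ls n`
(associated to the left). -/
def iterComp (Ls : ℕ → Set (ℕ → Set α)) (Vs : ℕ → Set α) : ℕ → Set (ℕ → Set α)
  | 0 => Ls 0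
  | n + 1 => comp (iterComp Ls Vs n) (accAlpha Vs n) (Ls (n + 1)) (Vs (n + 1))

/-! ### Auxiliary lemmas -/

lemma hist_restrict (σ : ℕ → Set α) (X : Set α) (m : ℕ) :
    hist (restrict σ X) m = restrictFin (hist σ m) X := by
  simp only [hist, restrict, restrictFin, List.map_map]
  rfl

lemma hist_succ (σ : ℕ → Set α) (m : ℕ) : hist σ (m + 1) = hist σ m ++ [σ m] := by
  simp [hist, List.range_succ]

lemma accAlpha_mono (Vs : ℕ → Set α) {k m : ℕ} (h : k ≤ m) :
    Vs k ⊆ accAlpha Vs m := by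
  induction m with
  | zero =>
    have : k = 0 := Nat.le_zero.mp h
    subst this; exact subset_rfl
  | succ m ih =>
    rcases Nat.lt_succ_iff_lt_or_eq.mp (Nat.lt_succ_of_le h) with h' | h'
    · exact (ih (Nat.lt_succ_iff.mp h')).trans Set.subset_union_left
    · subst h'; exact Set.subset_union_right

lemma iterComp_words (Ls : ℕ → Set (ℕ → Set α)) (Vs : ℕ → Set α) (m : ℕ)
    (h : ∀ k ≤ m, Ls k ⊆ WordsOver (Vs k)) :
    iterComp Ls Vs m ⊆ WordsOver (accAlpha Vs m) := by
  induction m with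
  | zero => exact h 0 le_rfl
  | succ m ih =>
    rintro σ ⟨σ₁, h1, σ₂, h2, hnc, rfl⟩ j x hx
    rcases hx with hx | hx
    · exact Or.inl (ih (fun k hk => h k (hk.trans (Nat.le_succ m))) h1 j hx)
    · exact Or.inr (h (m + 1) le_rfl h2 j hx)

/-- Every member of the iterated composition restricts into each component
language. -/
lemma iterComp_restrict (Ls : ℕ → Set (ℕ → Set α)) (Vs : ℕ → Set α) (m : ℕ) :
    (∀ k ≤ m, Ls k ⊆ WordsOver (Vs k)) →
    ∀ σ ∈ iterComp Ls Vs m, ∀ k ≤ m, restrict σ (Vs k) ∈ Ls k := by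
  induction m with
  | zero =>
    intro hLs σ hσ k hk
    have hk0 : k = 0 := Nat.le_zero.mp hk
    subst hk0
    have : restrict σ (Vs 0) = σ :=
      funext fun j => Set.inter_eq_left.mpr (hLs 0 le_rfl hσ j)
    rw [this]; exact hσ
  | succ m ih =>
    intro hLs σ hσ
    obtain ⟨σ₁, h1, σ₂, h2, hnc, rfl⟩ := hσ
    have hLs' : ∀ k ≤ m, Ls k ⊆ WordsOver (Vs k) :=
      fun k hk => hLs k (hk.trans (Nat.le_succ m))
    have h1W : σ₁ ∈ WordsOver (accAlpha Vs m) := iterComp_words Ls Vs m hLs' h1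
    intro k hk
    rcases Nat.lt_succ_iff_lt_or_eq.mp (Nat.lt_succ_of_le hk) with h' | h'
    · have hk' : k ≤ m := Nat.lt_succ_iff.mp h'
      have heq : restrict (wordUnion σ₁ σ₂) (Vs k) = restrict σ₁ (Vs k) := by
        funext j
        ext x
        simp only [restrict, wordUnion, Set.mem_inter_iff, Set.mem_union]
        constructor
        · rintro ⟨hx | hx, hxk⟩
          · exact ⟨hx, hxk⟩
          · have hacc : x ∈ accAlpha Vs m := accAlpha_mono Vs hk' hxk
            have : x ∈ σ₂ j ∩ accAlpha Vs m := ⟨hx, hacc⟩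
            have : x ∈ σ₁ j ∩ Vs (m + 1) := by
              have := congrFun hnc j
              simp only [restrict] at this
              rw [this]; exact ‹x ∈ σ₂ j ∩ accAlpha Vs m›
            exact ⟨this.1, hxk⟩
        · rintro ⟨hx, hxk⟩; exact ⟨Or.inl hx, hxk⟩
      rw [heq]; exact ih hLs' σ₁ h1 k hk'
    · subst h'
      have heq : restrict (wordUnion σ₁ σ₂) (Vs (m + 1)) = σ₂ := by
        funext j
        ext x
        simp only [restrict, wordUnion, Set.mem_inter_iff, Set.mem_union]
        constructor
        · rintro ⟨hx | hx, hxk⟩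
          · have : x ∈ σ₂ j ∩ accAlpha Vs m := by
              have h' := congrFun hnc j
              simp only [restrict] at h'
              rw [← h']; exact ⟨hx, hxk⟩
            exact this.1
          · exact hx
        · intro hx
          exact ⟨Or.inr hx, hLs (m + 1) le_rfl h2 j hx⟩
      rw [heq]; exact h2

/-- Conversely, a word all of whose restrictions lie in the component languages
belongs to the iterated composition (after restricting to the union alphabet). -/
lemma restrict_iterComp (Ls : ℕ → Set (ℕ → Set α)) (Vs : ℕ → Set α) (m : ℕ)
    {σ : ℕ → Set α} (h : ∀ k ≤ m, restrict σ (Vs k) ∈ Ls k) :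
    restrict σ (accAlpha Vs m) ∈ iterComp Ls Vs m := by
  induction m with
  | zero => exact h 0 le_rfl
  | succ m ih =>
    refine ⟨restrict σ (accAlpha Vs m),
      ih (fun k hk => h k (hk.trans (Nat.le_succ m))),
      restrict σ (Vs (m + 1)), h (m + 1) le_rfl, ?_, ?_⟩
    · funext j
      simp only [restrict]
      exact Set.inter_right_comm _ _ _
    · funext j
      simp only [restrict, wordUnion, accAlpha]
      exact Set.inter_union_distrib_left _ _ _

/-- The history built by iterating a step function. -/
def cHist (step : List (Set α) → Set α) : ℕ → List (Set α)
  | 0 => []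
  | m + 1 => cHist step m ++ [step (cHist step m)]

lemma hist_cHist (step : List (Set α) → Set α) (m : ℕ) :
    hist (fun j => step (cHist step j)) m = cHist step m := by
  induction m with
  | zero => rfl
  | succ m ih => rw [hist_succ, ih]; rfl

/-- soundness and completeness of modular synthesis for a family
of `n + 1` sublanguages `Ls 0, …, Ls n`. -/
theorem modular_synthesis
    (V I O : Set α) (hVfin : V.Finite) (hpart : I ∪ O = V) (hIO : I ∩ O = ∅)
    (n : ℕ) (Vs : ℕ → Set α) (Ls : ℕ → Set (ℕ → Set α))
    (hVs : ∀ k ≤ n, Vs k ⊆ V)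
    (hLs : ∀ k ≤ n, Ls k ⊆ WordsOver (Vs k))
    (hpair : ∀ i ≤ n, ∀ j ≤ n, i ≠ j → Vs i ∩ Vs j ⊆ I)
    (hcover : accAlpha Vs n = V)
    (L : Set (ℕ → Set α)) (hL : L ⊆ WordsOver V)
    (hcomp : iterComp Ls Vs n = L)
    (hcs : ∀ k ≤ n, ¬ Realizable (Vs k) (I ∩ Vs k) (O ∩ Vs k) (Ls k) →
      ∃ fc : List (Set α) → Set α, (∀ h, fc h ⊆ I ∩ Vs k) ∧
        Counterstrategy (Vs k) (I ∩ Vs k) fc (Ls k)) :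
    (Realizable V I O L ↔
        ∀ k ≤ n, Realizable (Vs k) (I ∩ Vs k) (O ∩ Vs k) (Ls k)) ∧
    (∀ fs : ℕ → List (Set α) → Set α → Set α,
      (∀ k ≤ n, (∀ h i, fs k h i ⊆ O ∩ Vs k) ∧
        Realizes (Vs k) (I ∩ Vs k) (O ∩ Vs k) (fs k) (Ls k)) →
      Realizes V I O
        (fun h i => ⋃ k ∈ Finset.range (n + 1),
          fs k (restrictFin h (Vs k)) (i ∩ Vs k)) L) := by
  classical
  have hIV : I ⊆ V := hpart ▸ Set.subset_union_left
  have hOV : O ⊆ V := hpart ▸ Set.subset_union_right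
  -- Part 2: the composed implementation realizes L.
  have part2 : ∀ fs : ℕ → List (Set α) → Set α → Set α,
      (∀ k ≤ n, (∀ h i, fs k h i ⊆ O ∩ Vs k) ∧
        Realizes (Vs k) (I ∩ Vs k) (O ∩ Vs k) (fs k) (Ls k)) →
      Realizes V I O
        (fun h i => ⋃ k ∈ Finset.range (n + 1),
          fs k (restrictFin h (Vs k)) (i ∩ Vs k)) L := by
    intro fs hfs σ hσ
    obtain ⟨hσV, hσf⟩ := hσ
    have key : ∀ k ≤ n, restrict σ (Vs k) ∈ Ls k := by
      intro k hk
      obtain ⟨hsub, hreal⟩ := hfs k hk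
      apply hreal
      refine ⟨fun m => Set.inter_subset_right, fun m => ?_⟩
      rw [hist_restrict]
      have hin : restrict σ (Vs k) m ∩ (I ∩ Vs k) = (σ m ∩ I) ∩ Vs k := by
        simp only [restrict]
        ext x
        simp only [Set.mem_inter_iff]
        tauto
      have hout : restrict σ (Vs k) m ∩ (O ∩ Vs k) = (σ m ∩ O) ∩ Vs k := by
        simp only [restrict]
        ext x
        simp only [Set.mem_inter_iff]
        tauto
      rw [hin, hout, ← hσf m]
      ext x
      simp only [Set.mem_inter_iff, Set.mem_iUnion, Finset.mem_range,
        Nat.lt_succ_iff, exists_prop]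
      constructor
      · intro hx
        have hxO : x ∈ O ∩ Vs k := hsub _ _ hx
        exact ⟨⟨k, hk, hx⟩, hxO.2⟩
      · rintro ⟨⟨j, hj, hx⟩, hxk⟩
        rcases eq_or_ne j k with rfl | hne
        · exact hx
        · exfalso
          have hxO : x ∈ O ∩ Vs j := (hfs j hj).1 _ _ hx
          have hxI : x ∈ I := hpair j hj k hk hne ⟨hxO.2, hxk⟩
          have : x ∈ I ∩ O := ⟨hxI, hxO.1⟩
          rw [hIO] at this
          exact this
    have hrV : restrict σ V = σ :=
      funext fun m => Set.inter_eq_left.mpr (hσV m)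
    have hmem := restrict_iterComp Ls Vs n key
    rw [hcover, hrV, hcomp] at hmem
    exact hmem
  refine ⟨⟨?_, ?_⟩, part2⟩
  · -- realizability of L implies realizability of each component
    rintro ⟨f, hfO, hf⟩ k hk
    by_contra hnr
    obtain ⟨fc, hfcI, hfccs⟩ := hcs k hk hnr
    set inS : List (Set α) → Set α := fun h => fc (restrictFin h (Vs k)) with hinS
    set step : List (Set α) → Set α := fun h => inS h ∪ f h (inS h) with hstep
    set σ : ℕ → Set α := fun m => step (cHist step m) with hσdef
    have hHist : ∀ m, hist σ m = cHist step m := fun m => hist_cHist step m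
    have hσI : ∀ m, σ m ∩ I = inS (cHist step m) := by
      intro m
      ext x
      simp only [hσdef, hstep, Set.mem_inter_iff, Set.mem_union]
      constructor
      · rintro ⟨hx | hx, hxI⟩
        · exact hx
        · exfalso
          have hxO : x ∈ O := hfO _ _ hx
          have : x ∈ I ∩ O := ⟨hxI, hxO⟩
          rw [hIO] at this
          exact this
      · intro hx
        exact ⟨Or.inl hx, (hfcI _ hx).1⟩
    have hσO : ∀ m, σ m ∩ O = f (cHist step m) (inS (cHist step m)) := by
      intro m
      ext x
      simp only [hσdef, hstep, Set.mem_inter_iff, Set.mem_union]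
      constructor
      · rintro ⟨hx | hx, hxO⟩
        · exfalso
          have hxI : x ∈ I := (hfcI _ hx).1
          have : x ∈ I ∩ O := ⟨hxI, hxO⟩
          rw [hIO] at this
          exact this
        · exact hx
      · intro hx
        exact ⟨Or.inr hx, hfO _ _ hx⟩
    have hσV : ∀ m, σ m ⊆ V := by
      intro m x hx
      rcases hx with hx | hx
      · exact hIV (hfcI _ hx).1
      · exact hOV (hfO _ _ hx)
    have hσL : σ ∈ L := by
      apply hf
      refine ⟨hσV, fun m => ?_⟩
      rw [hHist m, hσI m, hσO m]
    have hres : restrict σ (Vs k) ∈ Ls k := by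
      apply iterComp_restrict Ls Vs n hLs σ _ k hk
      rw [hcomp]; exact hσL
    apply hfccs (restrict σ (Vs k)) _ hres
    refine ⟨fun m => Set.inter_subset_right, fun m => ?_⟩
    rw [hist_restrict, hHist m]
    have h1 : fc (restrictFin (cHist step m) (Vs k)) = inS (cHist step m) := rfl
    rw [h1]
    have h2 : restrict σ (Vs k) m ∩ (I ∩ Vs k) = (σ m ∩ I) ∩ Vs k := by
      simp only [restrict]
      ext x
      simp only [Set.mem_inter_iff]
      tauto
    rw [h2, hσI m]
    exact (Set.inter_eq_left.mpr fun x hx => (hfcI _ hx).2).symm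
  · -- realizability of all components implies realizability of L
    intro hall
    set fs : ℕ → List (Set α) → Set α → Set α :=
      fun k => if h : k ≤ n then (hall k h).choose else fun _ _ => ∅ with hfsdef
    have hfs : ∀ k ≤ n, (∀ h i, fs k h i ⊆ O ∩ Vs k) ∧
        Realizes (Vs k) (I ∩ Vs k) (O ∩ Vs k) (fs k) (Ls k) := by
      intro k hk
      have hspec := (hall k hk).choose_spec
      simp only [hfsdef, dif_pos hk]
      exact hspec
    refine ⟨fun h i => ⋃ k ∈ Finset.range (n + 1),
      fs k (restrictFin h (Vs k)) (i ∩ Vs k), ?_, part2 fs hfs⟩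
    intro h i
    refine Set.iUnion₂_subset fun k hk => ?_
    exact ((hfs k (Nat.lt_succ_iff.mp (Finset.mem_range.mp hk))).1 _ _).trans
      Set.inter_subset_left

end SpecDecomp
end

section
/- Let V be a finite set of atomic propositions partitioned into inputs I and outputs O, and let φ = (φ1 ∧ φ2 ∧ φ3) → (ψ1 ∧ ψ2) be an LTL formula with prop(φ) = V, where prop(φ3) ⊆ I, prop(ψ1) ∩ prop(ψ2) ⊆ I, prop(φi) ∩ prop(φj) = ∅ for distinct i, j ∈ {1,2,3}, and prop(φi) ∩ prop(ψ_{3−i}) = ∅ for i ∈ {1,2}. Assume that ¬(φ1 ∧ φ2 ∧ φ3) is unrealizable over V and that there exists a counterstrategy for its language (so every word compatible with this counterstrategy satisfies φ1 ∧ φ2 ∧ φ3). Then φ is realizable over V if and only if both φ' = (φ1 ∧ φ3) → ψ1 and φ'' = (φ2 ∧ φ3) → ψ2 are realizable (over the variables occurring in them, with the corresponding restricted inputs and outputs). -/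
namespace SpecDecomp

variable {α : Type*}

/-- Syntax of linear-time temporal logic. -/
inductive LTL (α : Type*) where
  | atom : α → LTL α
  | tt : LTL α
  | not : LTL α → LTL α
  | or : LTL α → LTL α → LTL α
  | and : LTL α → LTL α → LTL α
  | next : LTL α → LTL α
  | until_ : LTL α → LTL α → LTL α

namespace LTL

/-- The set of atomic propositions occurring in a formula
(`true` contributes no atomic propositions). -/
def props : LTL α → Set α
  | atom a => {a}
  | tt => ∅
  | not φ => props φ
  | or φ ψ => props φ ∪ props ψ
  | and φ ψ => props φ ∪ props ψ
  | next φ => props φ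
  | until_ φ ψ => props φ ∪ props ψ

/-- Satisfaction of an LTL formula at position `n` of the infinite word `σ`. -/
def SatAt (σ : ℕ → Set α) : LTL α → ℕ → Prop
  | atom a, n => a ∈ σ n
  | tt, _ => True
  | not φ, n => ¬ SatAt σ φ n
  | or φ ψ, n => SatAt σ φ n ∨ SatAt σ ψ n
  | and φ ψ, n => SatAt σ φ n ∧ SatAt σ ψ n
  | next φ, n => SatAt σ φ (n + 1)
  | until_ φ ψ, n =>
      ∃ m, n ≤ m ∧ SatAt σ ψ m ∧ ∀ k, n ≤ k → k < m → SatAt σ φ k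

/-- `σ ⊨ φ`. -/
def Sat (σ : ℕ → Set α) (φ : LTL α) : Prop := SatAt σ φ 0

/-- Implication, as the usual abbreviation `φ → ψ ≡ ¬φ ∨ ψ`. -/
def impl (φ ψ : LTL α) : LTL α := or (not φ) ψ

/-- The language of `φ` over the alphabet `2^W`. -/
def LangOver (φ : LTL α) (W : Set α) : Set (ℕ → Set α) :=
  {σ | (∀ n, σ n ⊆ W) ∧ Sat σ φ}

end LTL

/-! ### Auxiliary material for the proof -/

/-- Satisfaction only depends on the atomic propositions of the formula. -/
lemma satAt_congr (φ : LTL α) {σ τ : ℕ → Set α}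
    (h : ∀ a ∈ φ.props, ∀ n, (a ∈ σ n ↔ a ∈ τ n)) :
    ∀ n, LTL.SatAt σ φ n ↔ LTL.SatAt τ φ n := by
  induction φ with
  | atom a => intro n; simpa [LTL.SatAt] using h a (by simp [LTL.props]) n
  | tt => intro n; simp [LTL.SatAt]
  | not φ ih => intro n; simp only [LTL.SatAt]; exact not_congr (ih h n)
  | or φ ψ ih₁ ih₂ =>
      intro n; simp only [LTL.SatAt]
      exact or_congr (ih₁ (fun a ha => h a (Or.inl ha)) n)
        (ih₂ (fun a ha => h a (Or.inr ha)) n)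
  | and φ ψ ih₁ ih₂ =>
      intro n; simp only [LTL.SatAt]
      exact and_congr (ih₁ (fun a ha => h a (Or.inl ha)) n)
        (ih₂ (fun a ha => h a (Or.inr ha)) n)
  | next φ ih => intro n; simp only [LTL.SatAt]; exact ih h (n + 1)
  | until_ φ ψ ih₁ ih₂ =>
      intro n; simp only [LTL.SatAt]
      refine exists_congr fun m => and_congr_right fun _ => ?_
      refine and_congr (ih₂ (fun a ha => h a (Or.inr ha)) m) ?_
      exact forall_congr' fun k => forall_congr' fun _ => forall_congr' fun _ =>
        ih₁ (fun a ha => h a (Or.inl ha)) k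

/-- One step of the simulation of an implementation `f` against the mix of an
external input (on the sub-alphabet `W`) and a counterstrategy `fc` (off `W`).
The first component is the letter of the "real" word, the second that of the
"virtual" word which is fully compatible with the counterstrategy. -/
def simStep (f : List (Set α) → Set α → Set α) (fc : List (Set α) → Set α)
    (W : Set α) (l : List (Set α × Set α)) (x : Set α) : Set α × Set α :=
  ((x ∪ (fc (l.map Prod.snd) \ W)) ∪
      f (l.map Prod.fst) (x ∪ (fc (l.map Prod.snd) \ W)),
    fc (l.map Prod.snd) ∪
      f (l.map Prod.fst) (x ∪ (fc (l.map Prod.snd) \ W)))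

/-- The history of the simulation after `n` steps, driven by the external
input stream `e`. -/
def simH (f : List (Set α) → Set α → Set α) (fc : List (Set α) → Set α)
    (W : Set α) (e : ℕ → Set α) : ℕ → List (Set α × Set α)
  | 0 => []
  | n + 1 => simH f fc W e n ++ [simStep f fc W (simH f fc W e n) (e n)]

/-- The counterstrategy's input at step `n` of the simulation. -/
def simTI (f : List (Set α) → Set α → Set α) (fc : List (Set α) → Set α)
    (W : Set α) (e : ℕ → Set α) (n : ℕ) : Set α :=
  fc ((simH f fc W e n).map Prod.snd)

/-- The full input of the real word at step `n` of the simulation. -/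
def simSI (f : List (Set α) → Set α → Set α) (fc : List (Set α) → Set α)
    (W : Set α) (e : ℕ → Set α) (n : ℕ) : Set α :=
  e n ∪ (simTI f fc W e n \ W)

/-- The output of `f` at step `n` of the simulation. -/
def simSO (f : List (Set α) → Set α → Set α) (fc : List (Set α) → Set α)
    (W : Set α) (e : ℕ → Set α) (n : ℕ) : Set α :=
  f ((simH f fc W e n).map Prod.fst) (simSI f fc W e n)

lemma simH_succ (f : List (Set α) → Set α → Set α) (fc : List (Set α) → Set α)
    (W : Set α) (e : ℕ → Set α) (n : ℕ) :
    simH f fc W e (n + 1) = simH f fc W e n ++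
      [(simSI f fc W e n ∪ simSO f fc W e n, simTI f fc W e n ∪ simSO f fc W e n)] := rfl

lemma simH_eq_range (f : List (Set α) → Set α → Set α) (fc : List (Set α) → Set α)
    (W : Set α) (e : ℕ → Set α) : ∀ n, simH f fc W e n =
      (List.range n).map (fun k =>
        (simSI f fc W e k ∪ simSO f fc W e k, simTI f fc W e k ∪ simSO f fc W e k))
  | 0 => rfl
  | n + 1 => by
      rw [simH_succ, simH_eq_range f fc W e n, List.range_succ, List.map_append,
        List.map_singleton]

lemma simH_congr (f : List (Set α) → Set α → Set α) (fc : List (Set α) → Set α)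
    (W : Set α) (e e' : ℕ → Set α) :
    ∀ n, (∀ k < n, e k = e' k) → simH f fc W e n = simH f fc W e' n
  | 0, _ => rfl
  | n + 1, h => by
      have ih := simH_congr f fc W e e' n fun k hk => h k (hk.trans (Nat.lt_succ_self n))
      show simH f fc W e n ++ _ = simH f fc W e' n ++ _
      rw [ih, h n (Nat.lt_succ_self n)]

/-- The strategy for the sub-specification obtained by simulating `f` against
the external inputs (recorded in the history) and the counterstrategy `fc`. -/
def gstrat (f : List (Set α) → Set α → Set α) (fc : List (Set α) → Set α)
    (W Iset : Set α) (h : List (Set α)) (i : Set α) : Set α :=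
  f ((simH f fc W (fun k => h.getD k ∅ ∩ Iset) h.length).map Prod.fst)
    (i ∪ (fc ((simH f fc W (fun k => h.getD k ∅ ∩ Iset) h.length).map Prod.snd) \ W)) ∩ W

/-- Key lemma: if an assume-guarantee specification `A → Ψ` is realizable and
the environment can enforce `A` by a counterstrategy, then any sub-specification
`χ → ρ` over a sub-alphabet `W` is realizable, provided the truth of `A` can be
transferred (`hAtrans`). -/
lemma realizable_sub
    (V I O : Set α) (hpart : I ∪ O = V) (hIO : I ∩ O = ∅)
    (A Ψ χ ρ : LTL α) (W : Set α) (hWV : W ⊆ V)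
    (hχW : χ.props ⊆ W) (hρW : ρ.props ⊆ W)
    (hAtrans : ∀ σ τ : ℕ → Set α, LTL.SatAt τ A 0 →
        (∀ a, a ∉ W → ∀ n, (a ∈ σ n ↔ a ∈ τ n)) → LTL.SatAt σ χ 0 → LTL.SatAt σ A 0)
    (hΨρ : ∀ σ : ℕ → Set α, LTL.SatAt σ Ψ 0 → LTL.SatAt σ ρ 0)
    (hreal : Realizable V I O ((A.impl Ψ).LangOver V))
    (hcs : ∃ fc, (∀ h, fc h ⊆ I) ∧ Counterstrategy V I fc ((LTL.not A).LangOver V)) :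
    Realizable W (I ∩ W) (O ∩ W) ((χ.impl ρ).LangOver W) := by
  obtain ⟨f, hfO, hf⟩ := hreal
  obtain ⟨fc, hfcI, hfc⟩ := hcs
  have hIOd : ∀ a, a ∈ I → a ∈ O → False := fun a h1 h2 =>
    Set.eq_empty_iff_forall_notMem.mp hIO a ⟨h1, h2⟩
  refine ⟨gstrat f fc W I, fun h i => Set.inter_subset_inter (hfO _ _) subset_rfl, ?_⟩
  rintro σ₁ ⟨hsub, hcomp⟩
  set e : ℕ → Set α := fun k => σ₁ k ∩ I with he
  set sw : ℕ → Set α := fun n => simSI f fc W e n ∪ simSO f fc W e n with hswdef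
  set tw : ℕ → Set α := fun n => simTI f fc W e n ∪ simSO f fc W e n with htwdef
  have hEsubW : ∀ n, e n ⊆ W := fun n => Set.inter_subset_left.trans (hsub n)
  have hEsubI : ∀ n, e n ⊆ I := fun n => Set.inter_subset_right
  have hTI : ∀ n, simTI f fc W e n ⊆ I := fun n => hfcI _
  have hSI : ∀ n, simSI f fc W e n ⊆ I := fun n =>
    Set.union_subset (hEsubI n) (Set.diff_subset.trans (hTI n))
  have hSO : ∀ n, simSO f fc W e n ⊆ O := fun n => hfO _ _
  -- histories of the simulated words
  have hist_sw : ∀ n, hist sw n = (simH f fc W e n).map Prod.fst := by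
    intro n
    rw [simH_eq_range, hist, List.map_map]
    rfl
  have hist_tw : ∀ n, hist tw n = (simH f fc W e n).map Prod.snd := by
    intro n
    rw [simH_eq_range, hist, List.map_map]
    rfl
  -- the strategy reproduces the simulation
  have hgeq : ∀ n, gstrat f fc W I (hist σ₁ n) (σ₁ n ∩ (I ∩ W)) = simSO f fc W e n ∩ W := by
    intro n
    have hlen : (hist σ₁ n).length = n := by simp [hist]
    have hE : simH f fc W (fun k => (hist σ₁ n).getD k ∅ ∩ I) (hist σ₁ n).length
        = simH f fc W e n := by
      rw [hlen]
      apply simH_congr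
      intro k hk
      have hk' : k < ((List.range n).map σ₁).length := by simpa using hk
      have : (hist σ₁ n).getD k ∅ = σ₁ k := by
        rw [hist, List.getD_eq_getElem _ _ hk']
        simp
      rw [this]
    have hi : σ₁ n ∩ (I ∩ W) = e n := by
      ext a
      simp only [he, Set.mem_inter_iff]
      exact ⟨fun ⟨h1, h2, _⟩ => ⟨h1, h2⟩, fun ⟨h1, h2⟩ => ⟨h1, h2, hsub n h1⟩⟩
    show f _ _ ∩ W = _
    rw [hE, hi]
    rfl
  have hσO : ∀ n, σ₁ n ∩ O = simSO f fc W e n ∩ W := by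
    intro n
    have h2 := hcomp n
    rw [hgeq n] at h2
    rw [h2]
    ext a
    simp only [Set.mem_inter_iff]
    exact ⟨fun ⟨h1, h2⟩ => ⟨h1, h2, hsub n h1⟩, fun ⟨h1, h2, _⟩ => ⟨h1, h2⟩⟩
  have hσeq : ∀ n, σ₁ n = sw n ∩ W := by
    intro n
    ext a
    constructor
    · intro ha
      have haW := hsub n ha
      have haV : a ∈ I ∪ O := hpart.symm ▸ hWV haW
      rcases haV with haI | haO
      · exact ⟨Or.inl (Or.inl ⟨ha, haI⟩), haW⟩
      · have : a ∈ simSO f fc W e n ∩ W := hσO n ▸ (⟨ha, haO⟩ : a ∈ σ₁ n ∩ O)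
        exact ⟨Or.inr this.1, haW⟩
    · rintro ⟨(haE | haTI) | haSO, haW⟩
      · exact haE.1
      · exact absurd haW haTI.2
      · have : a ∈ σ₁ n ∩ O := hσO n ▸ (⟨haSO, haW⟩ : a ∈ simSO f fc W e n ∩ W)
        exact this.1
  -- compatibility of the real simulated word with f
  have hswI : ∀ n, sw n ∩ I = simSI f fc W e n := by
    intro n
    ext a
    simp only [hswdef, Set.mem_inter_iff, Set.mem_union]
    constructor
    · rintro ⟨hsi | hso, haI⟩
      · exact hsi
      · exact absurd haI (fun h => hIOd a h (hSO n hso))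
    · exact fun h => ⟨Or.inl h, hSI n h⟩
  have hswO : ∀ n, sw n ∩ O = simSO f fc W e n := by
    intro n
    ext a
    simp only [hswdef, Set.mem_inter_iff, Set.mem_union]
    constructor
    · rintro ⟨hsi | hso, haO⟩
      · exact absurd haO (fun h => hIOd a (hSI n hsi) h)
      · exact hso
    · exact fun h => ⟨Or.inr h, hSO n h⟩
  have htwI : ∀ n, tw n ∩ I = simTI f fc W e n := by
    intro n
    ext a
    simp only [htwdef, Set.mem_inter_iff, Set.mem_union]
    constructor
    · rintro ⟨hti | hso, haI⟩
      · exact hti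
      · exact absurd haI (fun h => hIOd a h (hSO n hso))
    · exact fun h => ⟨Or.inl h, hTI n h⟩
  have hswV : ∀ n, sw n ⊆ V := fun n =>
    Set.union_subset ((hSI n).trans (hpart ▸ Set.subset_union_left))
      ((hSO n).trans (hpart ▸ Set.subset_union_right))
  have htwV : ∀ n, tw n ⊆ V := fun n =>
    Set.union_subset ((hTI n).trans (hpart ▸ Set.subset_union_left))
      ((hSO n).trans (hpart ▸ Set.subset_union_right))
  have hfcomp : CompatibleImpl V I O f sw := by
    refine ⟨hswV, fun n => ?_⟩
    rw [hist_sw, hswI n, hswO n]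
    rfl
  obtain ⟨-, hsatΦ⟩ := hf sw hfcomp
  have htcomp : CompatibleCounter V I fc tw := by
    refine ⟨htwV, fun n => ?_⟩
    rw [hist_tw, htwI n]
    rfl
  have htA : LTL.SatAt tw A 0 := by
    by_contra hA
    exact hfc tw htcomp ⟨htwV, hA⟩
  refine ⟨hsub, ?_⟩
  show ¬ LTL.SatAt σ₁ χ 0 ∨ LTL.SatAt σ₁ ρ 0
  by_cases hχ1 : LTL.SatAt σ₁ χ 0
  · have hagW : ∀ a ∈ χ.props, ∀ n, (a ∈ σ₁ n ↔ a ∈ sw n) := by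
      intro a ha n
      rw [hσeq n]
      simp only [Set.mem_inter_iff]
      exact and_iff_left (hχW ha)
    have hχsw : LTL.SatAt sw χ 0 := (satAt_congr χ hagW 0).mp hχ1
    have hout : ∀ a, a ∉ W → ∀ n, (a ∈ sw n ↔ a ∈ tw n) := by
      intro a haW n
      simp only [hswdef, htwdef, Set.mem_union, simSI, Set.mem_diff]
      constructor
      · rintro ((haE | haTI) | haSO)
        · exact absurd (hEsubW n haE) haW
        · exact Or.inl haTI.1
        · exact Or.inr haSO
      · rintro (haTI | haSO)
        · exact Or.inl (Or.inr ⟨haTI, haW⟩)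
        · exact Or.inr haSO
    have hA : LTL.SatAt sw A 0 := hAtrans sw tw htA hout hχsw
    have hΨ : LTL.SatAt sw Ψ 0 := by
      rcases (hsatΦ : ¬ LTL.SatAt sw A 0 ∨ LTL.SatAt sw Ψ 0) with h | h
      · exact absurd hA h
      · exact h
    have hagρ : ∀ a ∈ ρ.props, ∀ n, (a ∈ σ₁ n ↔ a ∈ sw n) := by
      intro a ha n
      rw [hσeq n]
      simp only [Set.mem_inter_iff]
      exact and_iff_left (hρW ha)
    exact Or.inr ((satAt_congr ρ hagρ 0).mpr (hΨρ sw hΨ))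
  · exact Or.inl hχ1

/-- decomposition of an assume-guarantee specification
`(φ₁ ∧ φ₂ ∧ φ₃) → (ψ₁ ∧ ψ₂)` into `(φ₁ ∧ φ₃) → ψ₁` and `(φ₂ ∧ φ₃) → ψ₂`. -/
theorem assume_guarantee_decomposition
    (V I O : Set α) (hVfin : V.Finite) (hpart : I ∪ O = V) (hIO : I ∩ O = ∅)
    (φ₁ φ₂ φ₃ ψ₁ ψ₂ : LTL α)
    (hV : ((φ₁.and (φ₂.and φ₃)).impl (ψ₁.and ψ₂)).props = V)
    (hφ₃ : φ₃.props ⊆ I)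
    (hψ : ψ₁.props ∩ ψ₂.props ⊆ I)
    (h₁₂ : φ₁.props ∩ φ₂.props = ∅)
    (h₁₃ : φ₁.props ∩ φ₃.props = ∅)
    (h₂₃ : φ₂.props ∩ φ₃.props = ∅)
    (h₁ψ₂ : φ₁.props ∩ ψ₂.props = ∅)
    (h₂ψ₁ : φ₂.props ∩ ψ₁.props = ∅)
    (hunreal : ¬ Realizable V I O ((LTL.not (φ₁.and (φ₂.and φ₃))).LangOver V))
    (hcs : ∃ fc : List (Set α) → Set α, (∀ h, fc h ⊆ I) ∧
      Counterstrategy V I fc ((LTL.not (φ₁.and (φ₂.and φ₃))).LangOver V)) :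
    Realizable V I O (((φ₁.and (φ₂.and φ₃)).impl (ψ₁.and ψ₂)).LangOver V) ↔
      (Realizable ((φ₁.and φ₃).impl ψ₁).props
          (I ∩ ((φ₁.and φ₃).impl ψ₁).props) (O ∩ ((φ₁.and φ₃).impl ψ₁).props)
          (((φ₁.and φ₃).impl ψ₁).LangOver ((φ₁.and φ₃).impl ψ₁).props) ∧
       Realizable ((φ₂.and φ₃).impl ψ₂).props
          (I ∩ ((φ₂.and φ₃).impl ψ₂).props) (O ∩ ((φ₂.and φ₃).impl ψ₂).props)
          (((φ₂.and φ₃).impl ψ₂).LangOver ((φ₂.and φ₃).impl ψ₂).props)) := by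
  have hIOd : ∀ a, a ∈ I → a ∈ O → False := fun a h1 h2 =>
    Set.eq_empty_iff_forall_notMem.mp hIO a ⟨h1, h2⟩
  have d₁₂ : ∀ a, a ∈ φ₁.props → a ∈ φ₂.props → False := fun a h h' =>
    Set.eq_empty_iff_forall_notMem.mp h₁₂ a ⟨h, h'⟩
  have d₁₃ : ∀ a, a ∈ φ₁.props → a ∈ φ₃.props → False := fun a h h' =>
    Set.eq_empty_iff_forall_notMem.mp h₁₃ a ⟨h, h'⟩
  have d₂₃ : ∀ a, a ∈ φ₂.props → a ∈ φ₃.props → False := fun a h h' =>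
    Set.eq_empty_iff_forall_notMem.mp h₂₃ a ⟨h, h'⟩
  have d₁ψ₂ : ∀ a, a ∈ φ₁.props → a ∈ ψ₂.props → False := fun a h h' =>
    Set.eq_empty_iff_forall_notMem.mp h₁ψ₂ a ⟨h, h'⟩
  have d₂ψ₁ : ∀ a, a ∈ φ₂.props → a ∈ ψ₁.props → False := fun a h h' =>
    Set.eq_empty_iff_forall_notMem.mp h₂ψ₁ a ⟨h, h'⟩
  constructor
  · intro hreal
    constructor
    · refine realizable_sub V I O hpart hIO (φ₁.and (φ₂.and φ₃)) (ψ₁.and ψ₂)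
        (φ₁.and φ₃) ψ₁ _ ?_ ?_ ?_ ?_ (fun σ h => h.1) hreal hcs
      · rw [← hV]
        intro a ha
        simp only [LTL.impl, LTL.props, Set.mem_union] at ha ⊢
        tauto
      · intro a ha
        simp only [LTL.impl, LTL.props, Set.mem_union] at ha ⊢
        tauto
      · intro a ha
        simp only [LTL.impl, LTL.props, Set.mem_union] at ha ⊢
        tauto
      · intro σ τ hτ hag hσ
        obtain ⟨hτ1, hτ2, hτ3⟩ := hτ
        obtain ⟨hσ1, hσ3⟩ := hσ
        refine ⟨hσ1, ?_, hσ3⟩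
        refine (satAt_congr φ₂ ?_ 0).mpr hτ2
        intro a ha n
        refine hag a ?_ n
        intro hW
        simp only [LTL.impl, LTL.props, Set.mem_union] at hW
        rcases hW with (h | h) | h
        · exact d₁₂ a h ha
        · exact d₂₃ a ha h
        · exact d₂ψ₁ a ha h
    · refine realizable_sub V I O hpart hIO (φ₁.and (φ₂.and φ₃)) (ψ₁.and ψ₂)
        (φ₂.and φ₃) ψ₂ _ ?_ ?_ ?_ ?_ (fun σ h => h.2) hreal hcs
      · rw [← hV]
        intro a ha
        simp only [LTL.impl, LTL.props, Set.mem_union] at ha ⊢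
        tauto
      · intro a ha
        simp only [LTL.impl, LTL.props, Set.mem_union] at ha ⊢
        tauto
      · intro a ha
        simp only [LTL.impl, LTL.props, Set.mem_union] at ha ⊢
        tauto
      · intro σ τ hτ hag hσ
        obtain ⟨hτ1, hτ2, hτ3⟩ := hτ
        obtain ⟨hσ2, hσ3⟩ := hσ
        refine ⟨?_, hσ2, hσ3⟩
        refine (satAt_congr φ₁ ?_ 0).mpr hτ1
        intro a ha n
        refine hag a ?_ n
        intro hW
        simp only [LTL.impl, LTL.props, Set.mem_union] at hW
        rcases hW with (h | h) | h
        · exact d₁₂ a ha h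
        · exact d₁₃ a ha h
        · exact d₁ψ₂ a ha h
  · rintro ⟨⟨g₁, hg₁O, hg₁⟩, ⟨g₂, hg₂O, hg₂⟩⟩
    set W₁ := ((φ₁.and φ₃).impl ψ₁).props with hW₁def
    set W₂ := ((φ₂.and φ₃).impl ψ₂).props with hW₂def
    have hd12O : ∀ a, a ∈ W₁ → a ∈ W₂ → a ∈ O → False := by
      intro a h1 h2 hO
      refine hIOd a ?_ hO
      simp only [hW₁def, hW₂def, LTL.impl, LTL.props, Set.mem_union] at h1 h2
      rcases h1 with (h | h) | h
      · rcases h2 with (h' | h') | h'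
        · exact absurd h' (fun h' => d₁₂ a h h')
        · exact absurd h' (fun h' => d₁₃ a h h')
        · exact absurd h' (fun h' => d₁ψ₂ a h h')
      · exact hφ₃ h
      · rcases h2 with (h' | h') | h'
        · exact absurd h' (fun h' => d₂ψ₁ a h' h)
        · exact hφ₃ h'
        · exact hψ ⟨h, h'⟩
    refine ⟨fun h i => g₁ (restrictFin h W₁) (i ∩ W₁) ∪ g₂ (restrictFin h W₂) (i ∩ W₂),
      fun h i => Set.union_subset ((hg₁O _ _).trans Set.inter_subset_left)
        ((hg₂O _ _).trans Set.inter_subset_left), ?_⟩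
    rintro σ ⟨hsubV, hcomp⟩
    have hhist : ∀ (Wx : Set α) (n : ℕ), hist (restrict σ Wx) n = restrictFin (hist σ n) Wx := by
      intro Wx n
      simp [hist, restrict, restrictFin, List.map_map, Function.comp_def]
    have hc1 : CompatibleImpl W₁ (I ∩ W₁) (O ∩ W₁) g₁ (restrict σ W₁) := by
      refine ⟨fun n => Set.inter_subset_right, fun n => ?_⟩
      have h2 : g₁ (restrictFin (hist σ n) W₁) ((σ n ∩ I) ∩ W₁) ∪
          g₂ (restrictFin (hist σ n) W₂) ((σ n ∩ I) ∩ W₂) = σ n ∩ O := hcomp n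
      rw [hhist W₁ n]
      have harg : restrict σ W₁ n ∩ (I ∩ W₁) = (σ n ∩ I) ∩ W₁ := by
        ext a; simp only [restrict, Set.mem_inter_iff]; tauto
      rw [harg]
      ext a
      simp only [restrict, Set.mem_inter_iff]
      constructor
      · intro ha
        have haOW : a ∈ O ∩ W₁ := hg₁O _ _ ha
        have hmem : a ∈ σ n ∩ O := h2 ▸ Set.mem_union_left _ ha
        exact ⟨⟨hmem.1, haOW.2⟩, hmem.2, haOW.2⟩
      · rintro ⟨⟨haσ, haW⟩, haO, -⟩
        have hmem : a ∈ g₁ (restrictFin (hist σ n) W₁) (σ n ∩ I ∩ W₁) ∪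
            g₂ (restrictFin (hist σ n) W₂) (σ n ∩ I ∩ W₂) := h2.symm ▸ (⟨haσ, haO⟩ : a ∈ σ n ∩ O)
        rcases hmem with h | h
        · exact h
        · exact absurd haO (fun _ => hd12O a haW (hg₂O _ _ h).2 haO)
    have hc2 : CompatibleImpl W₂ (I ∩ W₂) (O ∩ W₂) g₂ (restrict σ W₂) := by
      refine ⟨fun n => Set.inter_subset_right, fun n => ?_⟩
      have h2 : g₁ (restrictFin (hist σ n) W₁) ((σ n ∩ I) ∩ W₁) ∪
          g₂ (restrictFin (hist σ n) W₂) ((σ n ∩ I) ∩ W₂) = σ n ∩ O := hcomp n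
      rw [hhist W₂ n]
      have harg : restrict σ W₂ n ∩ (I ∩ W₂) = (σ n ∩ I) ∩ W₂ := by
        ext a; simp only [restrict, Set.mem_inter_iff]; tauto
      rw [harg]
      ext a
      simp only [restrict, Set.mem_inter_iff]
      constructor
      · intro ha
        have haOW : a ∈ O ∩ W₂ := hg₂O _ _ ha
        have hmem : a ∈ σ n ∩ O := h2 ▸ Set.mem_union_right _ ha
        exact ⟨⟨hmem.1, haOW.2⟩, hmem.2, haOW.2⟩
      · rintro ⟨⟨haσ, haW⟩, haO, -⟩
        have hmem : a ∈ g₁ (restrictFin (hist σ n) W₁) (σ n ∩ I ∩ W₁) ∪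
            g₂ (restrictFin (hist σ n) W₂) (σ n ∩ I ∩ W₂) := h2.symm ▸ (⟨haσ, haO⟩ : a ∈ σ n ∩ O)
        rcases hmem with h | h
        · exact absurd haO (fun _ => hd12O a (hg₁O _ _ h).2 haW haO)
        · exact h
    have hm1 := hg₁ _ hc1
    have hm2 := hg₂ _ hc2
    refine ⟨hsubV, ?_⟩
    show ¬ LTL.SatAt σ (φ₁.and (φ₂.and φ₃)) 0 ∨ LTL.SatAt σ (ψ₁.and ψ₂) 0
    by_cases hA : LTL.SatAt σ (φ₁.and (φ₂.and φ₃)) 0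
    · right
      obtain ⟨hA1, hA2, hA3⟩ := hA
      have htrans : ∀ (Wx : Set α) (θ : LTL α), θ.props ⊆ Wx →
          (LTL.SatAt σ θ 0 ↔ LTL.SatAt (restrict σ Wx) θ 0) := by
        intro Wx θ hθ
        refine satAt_congr θ ?_ 0
        intro a ha n
        simp only [restrict, Set.mem_inter_iff]
        exact (and_iff_left (hθ ha)).symm
      have sub1χ : (φ₁.and φ₃).props ⊆ W₁ := by
        intro a ha
        simp only [hW₁def, LTL.impl, LTL.props, Set.mem_union] at ha ⊢
        tauto
      have sub1ρ : ψ₁.props ⊆ W₁ := by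
        intro a ha
        simp only [hW₁def, LTL.impl, LTL.props, Set.mem_union]
        tauto
      have sub2χ : (φ₂.and φ₃).props ⊆ W₂ := by
        intro a ha
        simp only [hW₂def, LTL.impl, LTL.props, Set.mem_union] at ha ⊢
        tauto
      have sub2ρ : ψ₂.props ⊆ W₂ := by
        intro a ha
        simp only [hW₂def, LTL.impl, LTL.props, Set.mem_union]
        tauto
      have hχ1 : LTL.SatAt (restrict σ W₁) (φ₁.and φ₃) 0 :=
        (htrans W₁ _ sub1χ).mp ⟨hA1, hA3⟩
      have hχ2 : LTL.SatAt (restrict σ W₂) (φ₂.and φ₃) 0 :=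
        (htrans W₂ _ sub2χ).mp ⟨hA2, hA3⟩
      have hψ1 : LTL.SatAt σ ψ₁ 0 := by
        rcases (hm1.2 : ¬ LTL.SatAt (restrict σ W₁) (φ₁.and φ₃) 0 ∨
            LTL.SatAt (restrict σ W₁) ψ₁ 0) with h | h
        · exact absurd hχ1 h
        · exact (htrans W₁ ψ₁ sub1ρ).mpr h
      have hψ2 : LTL.SatAt σ ψ₂ 0 := by
        rcases (hm2.2 : ¬ LTL.SatAt (restrict σ W₂) (φ₂.and φ₃) 0 ∨
            LTL.SatAt (restrict σ W₂) ψ₂ 0) with h | h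
        · exact absurd hχ2 h
        · exact (htrans W₂ ψ₂ sub2ρ).mpr h
      exact ⟨hψ1, hψ2⟩
    · exact Or.inl hA

end SpecDecomp
end
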